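/- arXiv:1405.7126 — 12 statements merged into one kernel-verified Lean document; each statement's English description precedes it below -/
import Mathlib

section
/- In the 3-dimensional complex evolution algebra E with natural basis {e1, e2, e3} and multiplication e1·e1 = e1+e2, e2·e2 = -e1-e2, e3·e3 = e2+e3 (and ei·ej = 0 for i≠j), the 2-dimensional subspace E1 spanned by e1+e2 and e2+e3 is closed under multiplication (i.e., is a subalgebra), but E1 admits no natural basis: there do not exist linearly independent f1, f2 ∈ E1 with f1·f2 = 0. -/
open scoped BigOperators

/-- Evolution-algebra multiplication on `Fin n → ℂ` given the matrix `A` of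
structure constants: `(x·y) j = ∑ i, x i * y i * A i j`, so that the standard
basis vectors are pairwise orthogonal and `eᵢ·eᵢ = ∑ j, A i j • e j`. -/
noncomputable def evMul {n : ℕ} (A : Fin n → Fin n → ℂ) (x y : Fin n → ℂ) : Fin n → ℂ :=
  fun j => ∑ i, x i * y i * A i j

/-- Structure constants: e1² = e1+e2, e2² = -e1-e2, e3² = e2+e3. -/
noncomputable def A₀ : Fin 3 → Fin 3 → ℂ := ![![1, 1, 0], ![-1, -1, 0], ![0, 1, 1]]

/-! Every product lies in the plane `x₁ = x₀ + x₂`, which is therefore a subalgebra. On that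
plane the product of `f` and `g` vanishes iff `f₂g₂ = 0` and `f₀g₂ + f₂g₀ = 0`; then
`(f₀g₂ - f₂g₀)² = (f₀g₂ + f₂g₀)² - 4 f₀g₀ f₂g₂ = 0`, so the coordinates `(f₀, f₂)`
and `(g₀, g₂)`, which determine `f` and `g`, are proportional. -/

lemma mul_eq_mul_of_mul_eq_zero_of_add_eq_zero {R : Type*} [CommRing R] [IsReduced R]
    {a b c d : R} (hbd : b * d = 0) (h : a * d + b * c = 0) : a * d = b * c := by
  have hsq : (a * d - b * c) ^ 2 = 0 := by
    linear_combination (a * d + b * c) * h - 4 * a * c * hbd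
  exact sub_eq_zero.mp (IsNilpotent.eq_zero ⟨2, hsq⟩)

namespace EvolutionAlgebraA₀

lemma evMul_apply_zero (x y : Fin 3 → ℂ) : evMul A₀ x y 0 = x 0 * y 0 - x 1 * y 1 := by
  simp only [evMul, A₀, Fin.sum_univ_three, Matrix.cons_val_zero, Matrix.cons_val_one,
    Matrix.cons_val, mul_one, mul_neg, mul_zero, add_zero]
  ring

lemma evMul_apply_one (x y : Fin 3 → ℂ) :
    evMul A₀ x y 1 = x 0 * y 0 - x 1 * y 1 + x 2 * y 2 := by
  simp only [evMul, A₀, Fin.sum_univ_three, Matrix.cons_val_zero, Matrix.cons_val_one,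
    Matrix.cons_val, mul_one, mul_neg]
  ring

lemma evMul_apply_two (x y : Fin 3 → ℂ) : evMul A₀ x y 2 = x 2 * y 2 := by
  simp [evMul, A₀, Fin.sum_univ_three]

lemma mem_span_iff (x : Fin 3 → ℂ) :
    x ∈ Submodule.span ℂ {Pi.single 0 1 + Pi.single 1 1, Pi.single 1 1 + Pi.single 2 1} ↔
      x 1 = x 0 + x 2 := by
  rw [Submodule.mem_span_pair]
  constructor
  · rintro ⟨c, d, rfl⟩
    simp
  · intro h
    refine ⟨x 0, x 2, funext fun j => ?_⟩
    fin_cases j <;> simp [h]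

lemma evMul_mem_span (x y : Fin 3 → ℂ) :
    evMul A₀ x y ∈
      Submodule.span ℂ {Pi.single 0 1 + Pi.single 1 1, Pi.single 1 1 + Pi.single 2 1} := by
  rw [mem_span_iff, evMul_apply_zero, evMul_apply_one, evMul_apply_two]

lemma not_linearIndependent_of_evMul_eq_zero {f g : Fin 3 → ℂ}
    (hf : f 1 = f 0 + f 2) (hg : g 1 = g 0 + g 2) (h : evMul A₀ f g = 0) :
    ¬ LinearIndependent ℂ ![f, g] := by
  intro hli
  have h₂ : f 2 * g 2 = 0 := by simpa [evMul_apply_two] using congrFun h 2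
  have h₀ : f 0 * g 2 + f 2 * g 0 = 0 := by
    have := congrFun h 0
    rw [evMul_apply_zero, hf, hg, Pi.zero_apply] at this
    linear_combination -this - h₂
  have hcross : f 0 * g 2 = f 2 * g 0 := mul_eq_mul_of_mul_eq_zero_of_add_eq_zero h₂ h₀
  have coeffs_eq_zero (s t : ℂ) (hst : s * f 2 = t * g 2 ∧ s * f 0 = t * g 0) :
      s = 0 ∧ t = 0 := by
    have := LinearIndependent.pair_iff.mp hli s (-t) (funext fun j => ?_)
    · simpa using this
    simp only [Pi.add_apply, Pi.smul_apply, smul_eq_mul, Pi.zero_apply]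
    fin_cases j <;> dsimp only [Fin.zero_eta, Fin.mk_one, Fin.reduceFinMk]
    · linear_combination hst.2
    · linear_combination s * hf - t * hg + hst.1 + hst.2
    · linear_combination hst.1
  obtain ⟨hg0, hf0⟩ := coeffs_eq_zero (g 0) (f 0) ⟨by linear_combination -hcross, by ring⟩
  obtain ⟨hg2, hf2⟩ := coeffs_eq_zero (g 2) (f 2) ⟨by ring, by linear_combination hcross⟩
  apply hli.ne_zero 0
  funext j
  fin_cases j <;> simp [hf, hf0, hf2]

end EvolutionAlgebraA₀

open EvolutionAlgebraA₀ in
theorem stmt0 :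
    let e : Fin 3 → (Fin 3 → ℂ) := fun i => Pi.single i 1
    let E₁ : Submodule ℂ (Fin 3 → ℂ) := Submodule.span ℂ {e 0 + e 1, e 1 + e 2}
    (∀ x ∈ E₁, ∀ y ∈ E₁, evMul A₀ x y ∈ E₁) ∧
    ¬ ∃ f₁ f₂ : Fin 3 → ℂ, f₁ ∈ E₁ ∧ f₂ ∈ E₁ ∧
        LinearIndependent ℂ ![f₁, f₂] ∧ evMul A₀ f₁ f₂ = 0 := by
  intro e E₁
  refine ⟨fun x _ y _ => evMul_mem_span x y, ?_⟩
  rintro ⟨f, g, hf, hg, hli, hfg⟩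
  rw [mem_span_iff] at hf hg
  exact not_linearIndependent_of_evMul_eq_zero hf hg hfg hli
end

section
/- In the 3-dimensional complex evolution algebra E with natural basis {e1, e2, e3} and multiplication e1·e1 = e1+e2+e3, e2·e2 = -e1-e2+e3, e3·e3 = 0 (and ei·ej = 0 for i≠j), the subspace E1 spanned by e1+e2 and e3 is a subalgebra with natural basis {e1+e2, e3}, but no natural basis of E1 can be extended to a natural basis of E: there do not exist f1, f2 ∈ E1 and f3 ∈ E such that {f1, f2, f3} is a basis of E with f1·f2 = f1·f3 = f2·f3 = 0. -/
/-!
In coordinates, `x·y = (p, p, q)` with `p = x₁y₁ - x₂y₂` and `q = x₁y₁ + x₂y₂`, and `E₁` is the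
plane `x₁ = x₂`. If `x ∈ E₁` is off the line `ℂ e₃`, then `x·y = 0` reads
`x₁(y₁ - y₂) = x₁(y₁ + y₂) = 0`, so `y ∈ ℂ e₃`. Hence each of the orthogonal pairs `(f₁, f₂)`,
`(f₁, f₃)`, `(f₂, f₃)` has a member on `ℂ e₃`, so two of `f₁, f₂, f₃` lie on that line and cannot
be linearly independent.
-/

open scoped BigOperators

/-- Structure constants: e1² = e1+e2+e3, e2² = -e1-e2+e3, e3² = 0. -/
noncomputable def A₁ : Fin 3 → Fin 3 → ℂ := ![![1, 1, 1], ![-1, -1, 1], ![0, 0, 0]]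

theorem LinearIndependent.eq_of_mem_span_singleton {R M ι : Type*} [CommRing R] [Nontrivial R]
    [AddCommGroup M] [Module R M] {v : ι → M} (hv : LinearIndependent R v) {w : M} {i j : ι}
    (hi : v i ∈ R ∙ w) (hj : v j ∈ R ∙ w) : i = j := by
  by_contra hij
  obtain ⟨a, ha⟩ := Submodule.mem_span_singleton.mp hi
  obtain ⟨b, hb⟩ := Submodule.mem_span_singleton.mp hj
  have hdep : b • v i + (-a) • v j = 0 := by
    rw [← ha, ← hb, smul_comm b a w, neg_smul, add_neg_cancel]
  have ha0 : a = 0 :=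
    neg_eq_zero.mp ((LinearIndepOn.pair_iff v hij).mp (hv.linearIndepOn _) b (-a) hdep).2
  exact hv.ne_zero i (by rw [← ha, ha0, zero_smul])

lemma evMul_A₁ (x y : Fin 3 → ℂ) :
    evMul A₁ x y = ![x 0 * y 0 - x 1 * y 1, x 0 * y 0 - x 1 * y 1, x 0 * y 0 + x 1 * y 1] := by
  funext j
  fin_cases j <;> simp [evMul, A₁, Fin.sum_univ_three] <;> ring

lemma mem_span_single_add_single_single_iff (x : Fin 3 → ℂ) :
    x ∈ Submodule.span ℂ {Pi.single 0 1 + Pi.single 1 1, Pi.single 2 1} ↔ x 0 = x 1 := by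
  rw [Submodule.mem_span_pair]
  constructor
  · rintro ⟨a, b, rfl⟩
    simp
  · intro hx
    refine ⟨x 0, x 2, funext fun j => ?_⟩
    fin_cases j <;> simp [hx]

lemma mem_span_single_two_iff (x : Fin 3 → ℂ) :
    x ∈ ℂ ∙ Pi.single 2 1 ↔ x 0 = 0 ∧ x 1 = 0 := by
  rw [Submodule.mem_span_singleton]
  constructor
  · rintro ⟨a, rfl⟩
    simp
  · rintro ⟨h0, h1⟩
    refine ⟨x 2, funext fun j => ?_⟩
    fin_cases j <;> simp [h0, h1]

lemma mem_span_single_two_or_of_evMul_A₁_eq_zero {x y : Fin 3 → ℂ} (hx : x 0 = x 1)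
    (hxy : evMul A₁ x y = 0) : x ∈ ℂ ∙ Pi.single 2 1 ∨ y ∈ ℂ ∙ Pi.single 2 1 := by
  simp only [mem_span_single_two_iff, ← hx, and_self]
  have hp := congrFun hxy 0
  have hq := congrFun hxy 2
  simp only [evMul_A₁, ← hx, Pi.zero_apply, Matrix.cons_val_zero, Matrix.cons_val] at hp hq
  refine (eq_or_ne (x 0) 0).imp id fun hx0 => ?_
  have hdiff : y 0 - y 1 = 0 := (mul_eq_zero.mp (by linear_combination hp)).resolve_left hx0
  have hsum : y 0 + y 1 = 0 := (mul_eq_zero.mp (by linear_combination hq)).resolve_left hx0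
  exact ⟨by linear_combination (hsum + hdiff) / 2, by linear_combination (hsum - hdiff) / 2⟩

theorem stmt1 :
    let e : Fin 3 → (Fin 3 → ℂ) := fun i => Pi.single i 1
    let E₁ : Submodule ℂ (Fin 3 → ℂ) := Submodule.span ℂ {e 0 + e 1, e 2}
    -- E₁ is a subalgebra
    (∀ x ∈ E₁, ∀ y ∈ E₁, evMul A₁ x y ∈ E₁) ∧
    -- {e1+e2, e3} is a natural basis of E₁
    (LinearIndependent ℂ ![e 0 + e 1, e 2] ∧ evMul A₁ (e 0 + e 1) (e 2) = 0) ∧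
    -- but no natural basis of E₁ extends to a natural basis of E
    ¬ ∃ f₁ f₂ f₃ : Fin 3 → ℂ, f₁ ∈ E₁ ∧ f₂ ∈ E₁ ∧
        LinearIndependent ℂ ![f₁, f₂, f₃] ∧
        evMul A₁ f₁ f₂ = 0 ∧ evMul A₁ f₁ f₃ = 0 ∧ evMul A₁ f₂ f₃ = 0 := by
  intro e E₁
  simp only [E₁, e, mem_span_single_add_single_single_iff]
  refine ⟨fun x _ y _ => by simp [evMul_A₁], ⟨?_, by simp [evMul_A₁]⟩, ?_⟩
  · refine LinearIndependent.pair_iff.mpr fun s t hst => ⟨?_, ?_⟩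
    · simpa using congrFun hst 0
    · simpa using congrFun hst 2
  · rintro ⟨f₁, f₂, f₃, h₁, h₂, hind, h₁₂, h₁₃, h₂₃⟩
    have hne : ∀ i j : Fin 3, i ≠ j → ![f₁, f₂, f₃] i ∈ ℂ ∙ Pi.single 2 1 →
        ![f₁, f₂, f₃] j ∉ ℂ ∙ Pi.single 2 1 :=
      fun i j hij hi hj => hij (hind.eq_of_mem_span_singleton hi hj)
    rcases mem_span_single_two_or_of_evMul_A₁_eq_zero h₁ h₁₂ with hf₁ | hf₂
    · rcases mem_span_single_two_or_of_evMul_A₁_eq_zero h₂ h₂₃ with hf₂ | hf₃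
      · exact hne 0 1 (by decide) hf₁ hf₂
      · exact hne 0 2 (by decide) hf₁ hf₃
    · rcases mem_span_single_two_or_of_evMul_A₁_eq_zero h₁ h₁₃ with hf₁ | hf₃
      · exact hne 0 1 (by decide) hf₁ hf₂
      · exact hne 1 2 (by decide) hf₂ hf₃
end

section
/- The 2-dimensional complex evolution algebra E1 with natural basis {e1, e2} and multiplication e1·e1 = e1, e2·e2 = 0, e1·e2 = 0 satisfies the condition P: every subalgebra of E1 is an evolution subalgebra with a natural basis extendable to a natural basis of E1. Concretely, every 1-dimensional subalgebra of E1 is spanned by a scalar multiple of e1 or of e2. -/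
open scoped BigOperators

/-- Structure constants of E₁ : e1² = e1, e2² = 0. -/
noncomputable def AE1 : Fin 2 → Fin 2 → ℂ := ![![1, 0], ![0, 0]]

/-! In `E₁` the product is `x * y = (x₀ y₀) e₀`. A vector `x` with `x * x = c x` therefore has
`c x₁ = 0`: either `x₁ = 0`, so `x ∈ ℂ e₀`, or `c = 0`, so `x₀² = 0` and `x ∈ ℂ e₁`. Hence every
subalgebra is spanned by a subset of the natural basis `{e₀, e₁}`, which then extends to it. -/

/-- What condition P asks of a subalgebra `S`. -/
def HasExtendableNaturalBasis {n : ℕ} (A : Fin n → Fin n → ℂ) (S : Submodule ℂ (Fin n → ℂ)) :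
    Prop :=
  ∃ s t : Set (Fin n → ℂ), s ⊆ t ∧
    LinearIndependent ℂ ((↑) : s → (Fin n → ℂ)) ∧ Submodule.span ℂ s = S ∧
    LinearIndependent ℂ ((↑) : t → (Fin n → ℂ)) ∧ Submodule.span ℂ t = ⊤ ∧
    (∀ x ∈ t, ∀ y ∈ t, x ≠ y → evMul A x y = 0)

theorem Pi.linearIndependent_image_single_one {R η : Type*} [Semiring R] [DecidableEq η]
    (I : Set η) : LinearIndependent R ((↑) : ((fun i => Pi.single i (1 : R)) '' I) → (η → R)) :=
  ((Pi.linearIndependent_single_one η R).linearIndepOn I).id_image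

theorem Pi.span_range_single_one (R η : Type*) [Semiring R] [Finite η] [DecidableEq η] :
    Submodule.span R (Set.range fun i : η => Pi.single i (1 : R)) = ⊤ :=
  funext (Pi.basisFun_apply R η) ▸ (Pi.basisFun R η).span_eq

section NaturalBasis

variable {n : ℕ}

theorem evMul_single_single_of_ne (A : Fin n → Fin n → ℂ) {i j : Fin n} (h : i ≠ j) :
    evMul A (Pi.single i 1) (Pi.single j 1) = 0 := by
  funext k
  refine Finset.sum_eq_zero fun l _ => ?_
  by_cases hl : l = i
  · subst hl
    simp [Pi.single_eq_of_ne h]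
  · simp [Pi.single_eq_of_ne hl]

theorem hasExtendableNaturalBasis_span_image_single_one (A : Fin n → Fin n → ℂ)
    (I : Set (Fin n)) :
    HasExtendableNaturalBasis A (Submodule.span ℂ ((fun i => Pi.single i 1) '' I)) := by
  refine ⟨_, _, Set.image_subset_range _ I, Pi.linearIndependent_image_single_one I, rfl,
    Set.image_univ ▸ Pi.linearIndependent_image_single_one Set.univ,
    Pi.span_range_single_one ℂ (Fin n), ?_⟩
  rintro _ ⟨i, rfl⟩ _ ⟨j, rfl⟩ hij
  exact evMul_single_single_of_ne A fun hij' => hij (hij' ▸ rfl)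

end NaturalBasis

theorem evMul_AE1 (x y : Fin 2 → ℂ) : evMul AE1 x y = Pi.single 0 (x 0 * y 0) := by
  funext j
  fin_cases j <;> simp [evMul, AE1, Fin.sum_univ_two]

theorem exists_eq_smul_single_of_evMul_AE1_self_mem_span {x : Fin 2 → ℂ}
    (hx : evMul AE1 x x ∈ Submodule.span ℂ {x}) : ∃ i, ∃ c : ℂ, x = c • Pi.single i 1 := by
  obtain ⟨c, hc⟩ := Submodule.mem_span_singleton.mp hx
  rw [evMul_AE1] at hc
  have hc1 : c * x 1 = 0 := by simpa using congrFun hc 1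
  have hc0 : c * x 0 = x 0 * x 0 := by simpa using congrFun hc 0
  by_cases hx1 : x 1 = 0
  · refine ⟨0, x 0, funext fun j => ?_⟩
    fin_cases j <;> simp [hx1]
  · have hx0 : x 0 = 0 := by
      rw [(mul_eq_zero.mp hc1).resolve_right hx1, zero_mul] at hc0
      exact mul_self_eq_zero.mp hc0.symm
    refine ⟨1, x 1, funext fun j => ?_⟩
    fin_cases j <;> simp [hx0]

theorem exists_eq_span_image_single_one_of_AE1_mul_closed (S : Submodule ℂ (Fin 2 → ℂ))
    (hS : ∀ x ∈ S, ∀ y ∈ S, evMul AE1 x y ∈ S) :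
    ∃ I : Set (Fin 2), S = Submodule.span ℂ ((fun i => Pi.single i 1) '' I) := by
  have hdim : Module.finrank ℂ S ≤ 2 := by simpa using Submodule.finrank_le S
  interval_cases h : Module.finrank ℂ S
  · exact ⟨∅, by simpa using Submodule.finrank_eq_zero.mp h⟩
  · obtain ⟨v, hvS, hv0⟩ := Submodule.exists_mem_ne_zero_of_ne_bot fun hbot =>
      one_ne_zero (h ▸ Submodule.finrank_eq_zero.mpr hbot)
    have hSv : S = Submodule.span ℂ {v} := eq_span_singleton_of_mem_of_finrank_eq_one h hvS hv0
    obtain ⟨i, c, rfl⟩ :=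
      exists_eq_smul_single_of_evMul_AE1_self_mem_span (hSv ▸ hS v hvS v hvS)
    have hc : c ≠ 0 := by rintro rfl; simp at hv0
    refine ⟨{i}, ?_⟩
    rw [hSv, Set.image_singleton, Submodule.span_singleton_smul_eq (IsUnit.mk0 c hc)]
  · refine ⟨Set.univ, ?_⟩
    rw [Set.image_univ, Pi.span_range_single_one]
    exact Submodule.eq_top_of_finrank_eq (by rw [h]; simp)

theorem stmt2 :
    let e : Fin 2 → (Fin 2 → ℂ) := fun i => Pi.single i 1
    -- every 1-dimensional subalgebra is spanned by a scalar multiple of e1 or of e2,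
    (∀ x : Fin 2 → ℂ, x ≠ 0 → evMul AE1 x x ∈ Submodule.span ℂ {x} →
      (∃ c : ℂ, x = c • e 0) ∨ (∃ c : ℂ, x = c • e 1)) ∧
    -- hence every subalgebra admits a natural basis extendable to a natural basis of E₁:
    (∀ S : Submodule ℂ (Fin 2 → ℂ), (∀ x ∈ S, ∀ y ∈ S, evMul AE1 x y ∈ S) →
      ∃ s t : Set (Fin 2 → ℂ), s ⊆ t ∧
        LinearIndependent ℂ ((↑) : s → (Fin 2 → ℂ)) ∧ Submodule.span ℂ s = S ∧
        LinearIndependent ℂ ((↑) : t → (Fin 2 → ℂ)) ∧ Submodule.span ℂ t = ⊤ ∧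
        (∀ x ∈ t, ∀ y ∈ t, x ≠ y → evMul AE1 x y = 0)) := by
  refine ⟨fun x _ hx => ?_, fun S hS => ?_⟩
  · obtain ⟨i, c, hc⟩ := exists_eq_smul_single_of_evMul_AE1_self_mem_span hx
    fin_cases i
    exacts [Or.inl ⟨c, hc⟩, Or.inr ⟨c, hc⟩]
  · obtain ⟨I, rfl⟩ := exists_eq_span_image_single_one_of_AE1_mul_closed S hS
    exact hasExtendableNaturalBasis_span_image_single_one AE1 I
end

section
/- In the 2-dimensional complex evolution algebra E2 with natural basis {e1, e2} and multiplication e1·e1 = e1, e2·e2 = e1, e1·e2 = 0, the element x = e1 + i·e2 satisfies x·x = 0, so ⟨x⟩ is a 1-dimensional subalgebra; moreover there is no y ∈ E2 with {x, y} linearly independent and x·y = 0. Hence E2 does not satisfy condition P. -/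
open scoped BigOperators

/-- Structure constants of E₂ : e1² = e1, e2² = e1. -/
noncomputable def AE2 : Fin 2 → Fin 2 → ℂ := ![![1, 0], ![1, 0]]

/-! The product of E₂ is `x · y = (x₀ y₀ + x₁ y₁) e₁`, so `x = e₁ + i e₂` is isotropic for the
bilinear form `x₀ y₀ + x₁ y₁`, and its annihilator is the line it spans: no `y` independent
of `x` can satisfy `x · y = 0`. -/

lemma not_linearIndependent_pair_smul {R M : Type*} [Ring R] [Nontrivial R] [AddCommGroup M]
    [Module R M] (x : M) (c : R) : ¬ LinearIndependent R ![x, c • x] := by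
  intro h
  have hneg : (-1 : R) = 0 :=
    (LinearIndependent.pair_iff.1 h c (-1) (by rw [neg_one_smul, add_neg_cancel])).2
  exact one_ne_zero (neg_eq_zero.1 hneg)

lemma evMul_AE2 (x y : Fin 2 → ℂ) : evMul AE2 x y = Pi.single 0 (x 0 * y 0 + x 1 * y 1) := by
  funext j
  fin_cases j <;> simp [evMul, AE2, Fin.sum_univ_two]

lemma single_add_I_smul_single :
    (Pi.single 0 1 + Complex.I • Pi.single 1 1 : Fin 2 → ℂ) = ![1, Complex.I] := by
  funext j
  fin_cases j <;> simp

lemma eq_smul_of_evMul_AE2_eq_zero {y : Fin 2 → ℂ} (h : evMul AE2 ![1, Complex.I] y = 0) :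
    y = (-Complex.I * y 1) • ![1, Complex.I] := by
  have hy : y 0 + Complex.I * y 1 = 0 := by
    simpa [evMul_AE2] using congrFun h 0
  refine funext <| Fin.forall_fin_two.2 ⟨?_, ?_⟩ <;>
    simp only [Pi.smul_apply, smul_eq_mul, Matrix.cons_val_zero, Matrix.cons_val_one]
  · linear_combination hy
  · linear_combination y 1 * Complex.I_mul_I

theorem stmt4 :
    let e : Fin 2 → (Fin 2 → ℂ) := fun i => Pi.single i 1
    let x : Fin 2 → ℂ := e 0 + Complex.I • e 1
    -- x·x = 0, so ⟨x⟩ is a 1-dimensional subalgebra,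
    evMul AE2 x x = 0 ∧
    -- but there is no y with {x, y} linearly independent and x·y = 0
    ¬ ∃ y : Fin 2 → ℂ, LinearIndependent ℂ ![x, y] ∧ evMul AE2 x y = 0 := by
  intro e x
  rw [show x = ![1, Complex.I] from single_add_I_smul_single]
  refine ⟨by simp [evMul_AE2], ?_⟩
  rintro ⟨y, hli, hxy⟩
  rw [eq_smul_of_evMul_AE2_eq_zero hxy] at hli
  exact not_linearIndependent_pair_smul _ _ hli
end

section
/- Let a2, a3 ∈ ℂ with 1 - a2·a3 ≠ 0, and let E5 be the 2-dimensional complex evolution algebra with e1·e1 = e1 + a2·e2, e2·e2 = a3·e1 + e2, e1·e2 = 0. Then there exist A1, A2 ∈ ℂ with A1·A2 ≠ 0 such that the element x = A1·e1 + A2·e2 satisfies x·x = x; equivalently, the system A1² + a3·A2² = A1, a2·A1² + A2² = A2 has a solution with A1·A2 ≠ 0. -/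
/-!
Look for the idempotent on the line `A₂ = u A₁`. The two equations become
`A₁ (1 + a₃ u²) = 1` and `A₁ (a₂ + u²) = u`, which are compatible exactly when `u` is a root of
`a₃ u³ - u² + u - a₂`. Its coefficient of `u` is `1`, so over an algebraically closed field it has
a nonzero root (after dividing by `u` when `a₂ = 0`), and at such a root
`1 + a₃ u² ≠ 0`, since otherwise `u² = -a₂` and `1 - a₂ a₃ = 1 + a₃ u² = 0`.
-/

open scoped BigOperators

open Polynomial

variable {k : Type*} [Field k] [IsAlgClosed k]

theorem Polynomial.exists_isRoot_ne_zero {p : k[X]} (h₀ : p.coeff 0 ≠ 0) (h₁ : p.coeff 1 ≠ 0) :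
    ∃ x, x ≠ 0 ∧ p.IsRoot x := by
  have hdeg : p.degree ≠ 0 := fun h ↦ by
    have h₁ := le_degree_of_ne_zero h₁
    rw [h] at h₁
    exact absurd h₁ (by decide)
  obtain ⟨x, hx⟩ := IsAlgClosed.exists_root p hdeg
  refine ⟨x, ?_, hx⟩
  rintro rfl
  exact h₀ (by rwa [coeff_zero_eq_eval_zero])

theorem exists_ne_zero_cubic_eq_zero (a₂ a₃ : k) :
    ∃ u, u ≠ 0 ∧ a₃ * u ^ 3 - u ^ 2 + u - a₂ = 0 := by
  by_cases ha₂ : a₂ = 0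
  · obtain ⟨u, hu, hroot⟩ :=
      exists_isRoot_ne_zero (p := C a₃ * X ^ 2 - X + 1) (by simp) (by simp [coeff_X, coeff_one])
    refine ⟨u, hu, ?_⟩
    simp only [IsRoot, eval_add, eval_sub, eval_mul, eval_C, eval_pow, eval_X, eval_one] at hroot
    linear_combination u * hroot - ha₂
  · obtain ⟨u, hu, hroot⟩ := exists_isRoot_ne_zero (p := C a₃ * X ^ 3 - X ^ 2 + X - C a₂)
      (by simpa [coeff_X, coeff_C] using ha₂) (by simp [coeff_X])
    refine ⟨u, hu, ?_⟩
    simpa only [IsRoot, eval_add, eval_sub, eval_mul, eval_C, eval_pow, eval_X] using hroot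

theorem exists_idempotent_coords {a₂ a₃ : k} (h : 1 - a₂ * a₃ ≠ 0) :
    ∃ A₁ A₂ : k, A₁ * A₂ ≠ 0 ∧ A₁ ^ 2 + a₃ * A₂ ^ 2 = A₁ ∧ a₂ * A₁ ^ 2 + A₂ ^ 2 = A₂ := by
  obtain ⟨u, hu, hroot⟩ := exists_ne_zero_cubic_eq_zero a₂ a₃
  have hd : 1 + a₃ * u ^ 2 ≠ 0 := fun hd ↦
    h (by linear_combination (1 - a₃ * u) * hd + a₃ * hroot)
  refine ⟨(1 + a₃ * u ^ 2)⁻¹, u * (1 + a₃ * u ^ 2)⁻¹, by simp [hu, hd], ?_, ?_⟩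
  · field_simp
  · field_simp
    linear_combination -hroot

theorem evMul_fin_two_smul_single (a₂ a₃ A₁ A₂ : ℂ) :
    evMul ![![1, a₂], ![a₃, 1]] (A₁ • Pi.single 0 1 + A₂ • Pi.single 1 1)
        (A₁ • Pi.single 0 1 + A₂ • Pi.single 1 1) =
      (A₁ ^ 2 + a₃ * A₂ ^ 2) • Pi.single 0 1 + (a₂ * A₁ ^ 2 + A₂ ^ 2) • Pi.single 1 1 := by
  funext j
  fin_cases j <;> simp [evMul, Fin.sum_univ_two] <;> ring

theorem stmt6 (a₂ a₃ : ℂ) (h : 1 - a₂ * a₃ ≠ 0) :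
    let A : Fin 2 → Fin 2 → ℂ := ![![1, a₂], ![a₃, 1]]
    let e : Fin 2 → (Fin 2 → ℂ) := fun i => Pi.single i 1
    ∃ A₁ A₂ : ℂ, A₁ * A₂ ≠ 0 ∧
      evMul A (A₁ • e 0 + A₂ • e 1) (A₁ • e 0 + A₂ • e 1) = A₁ • e 0 + A₂ • e 1 ∧
      A₁ ^ 2 + a₃ * A₂ ^ 2 = A₁ ∧ a₂ * A₁ ^ 2 + A₂ ^ 2 = A₂ := by
  obtain ⟨A₁, A₂, hA, h₁, h₂⟩ := exists_idempotent_coords h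
  refine ⟨A₁, A₂, hA, ?_, h₁, h₂⟩
  rw [evMul_fin_two_smul_single, h₁, h₂]
end

section
/- Let a2, a3 ∈ ℂ with 1 - a2·a3 ≠ 0, and let E5 be the evolution algebra with e1·e1 = e1 + a2·e2, e2·e2 = a3·e1 + e2, e1·e2 = 0. If x = A1·e1 + A2·e2 with A1·A2 ≠ 0, then any y ∈ E5 with x·y = 0 satisfies y = 0. Hence no element with both coordinates nonzero can be extended to a natural basis of E5. -/
open scoped BigOperators

/-!
Products in an evolution algebra are computed coordinatewise and then pushed through the
structure matrix: `x · y = (x * y) ᵥ* A`. If `A` is nonsingular and no coordinate of `x`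
vanishes, then `x · y = 0` forces `x * y = 0` and hence `y = 0`. Every other member of a natural
basis through `x` is orthogonal to `x`, hence zero, which linear independence forbids; so the
basis would be `{x}` alone, impossible in dimension two.
-/

open Module Submodule

theorem evMul_eq_vecMul {n : ℕ} (A : Fin n → Fin n → ℂ) (x y : Fin n → ℂ) :
    evMul A x y = Matrix.vecMul (x * y) (Matrix.of A) :=
  rfl

theorem eq_zero_of_evMul_eq_zero {n : ℕ} {A : Fin n → Fin n → ℂ} (hA : (Matrix.of A).det ≠ 0)
    {x y : Fin n → ℂ} (hx : ∀ i, x i ≠ 0) (hxy : evMul A x y = 0) : y = 0 := by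
  rw [evMul_eq_vecMul] at hxy
  have hprod : x * y = 0 := Matrix.eq_zero_of_vecMul_eq_zero hA hxy
  funext i
  exact (mul_eq_zero.mp (congrFun hprod i)).resolve_left (hx i)

theorem not_exists_orthogonal_basis_of_forall_mul_eq_zero
    {K M : Type*} [DivisionRing K] [AddCommGroup M] [Module K M]
    (mul : M → M → M) (hM : 1 < finrank K M) {x : M} (hx : ∀ y, mul x y = 0 → y = 0) :
    ¬ ∃ t : Set M, x ∈ t ∧ LinearIndependent K ((↑) : t → M) ∧ span K t = ⊤ ∧
        (∀ u ∈ t, ∀ v ∈ t, u ≠ v → mul u v = 0) := by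
  rintro ⟨t, hxt, hli, hspan, horth⟩
  have hsub : t ⊆ {x} := fun v hvt => by
    by_contra hvx
    exact hli.ne_zero ⟨v, hvt⟩ (hx v (horth x hxt v hvt (Ne.symm hvx)))
  have htop : span K {x} = ⊤ := top_le_iff.mp (hspan ▸ span_mono hsub)
  have : finrank K M ≤ 1 := by
    rw [← finrank_top K M, ← htop]
    simpa using finrank_span_le_card ({x} : Set M)
  omega

theorem stmt7 (a₂ a₃ : ℂ) (h : 1 - a₂ * a₃ ≠ 0) (A₁ A₂ : ℂ) (hA : A₁ * A₂ ≠ 0) :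
    let A : Fin 2 → Fin 2 → ℂ := ![![1, a₂], ![a₃, 1]]
    let e : Fin 2 → (Fin 2 → ℂ) := fun i => Pi.single i 1
    let x : Fin 2 → ℂ := A₁ • e 0 + A₂ • e 1
    -- every y orthogonal to x is zero,
    (∀ y : Fin 2 → ℂ, evMul A x y = 0 → y = 0) ∧
    -- hence x cannot be extended to a natural basis of E₅
    ¬ ∃ t : Set (Fin 2 → ℂ), x ∈ t ∧
        LinearIndependent ℂ ((↑) : t → (Fin 2 → ℂ)) ∧ Submodule.span ℂ t = ⊤ ∧
        (∀ u ∈ t, ∀ v ∈ t, u ≠ v → evMul A u v = 0) := by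
  intro A e x
  have hdet : (Matrix.of A).det ≠ 0 := by
    simpa [A, Matrix.det_fin_two] using h
  have hx : ∀ i, x i ≠ 0 := by
    intro i
    fin_cases i
    · simpa [x, e] using left_ne_zero_of_mul hA
    · simpa [x, e] using right_ne_zero_of_mul hA
  have hann : ∀ y, evMul A x y = 0 → y = 0 := fun _ => eq_zero_of_evMul_eq_zero hdet hx
  exact ⟨hann, not_exists_orthogonal_basis_of_forall_mul_eq_zero (evMul A)
    (by simp) hann⟩
end

section
/- Let E be a finite-dimensional complex evolution algebra satisfying condition P. Then the evolution algebra E ⊕ ℂᵏ (direct sum of E with a k-dimensional algebra with zero multiplication) also satisfies condition P. -/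
open scoped BigOperators

/-- A set `t` is a natural basis of the nonassociative algebra `E` if it is a basis
consisting of pairwise orthogonal elements. -/
def IsNaturalBasisSet (E : Type*) [NonUnitalNonAssocRing E] [Module ℂ E] (t : Set E) : Prop :=
  LinearIndependent ℂ ((↑) : t → E) ∧ Submodule.span ℂ t = ⊤ ∧
    ∀ x ∈ t, ∀ y ∈ t, x ≠ y → x * y = 0

/-- Condition P: every subalgebra admits a natural basis which extends to a
natural basis of the whole algebra. -/
def ConditionP (E : Type*) [NonUnitalNonAssocRing E] [Module ℂ E] : Prop :=
  ∀ S : NonUnitalSubalgebra ℂ E, ∃ s t : Set E, s ⊆ t ∧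
    LinearIndependent ℂ ((↑) : s → E) ∧ Submodule.span ℂ s = S.toSubmodule ∧
    IsNaturalBasisSet E t

/-! In `E × E'` with `E'` of zero product, `(a, u) * (c, d) = (a * c, 0)`: the product only sees
first coordinates. For a subalgebra `S`, let `S₁ ⊆ E` be its projection and `U ⊆ E'` its fibre
over `0`. Choosing a linear `F : E → E'` whose graph over `S₁` lies in `S`, the shear
`(x, y) ↦ (x, y + F x)` maps `S₁ × U` onto `S`. Condition P for `E` applied to `S₁` gives `s ⊆ t`;
extend a basis `b` of `U` to a basis `w` of `E'`. The shear images of `s ∪ b` and `t ∪ w` are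
the required bases: the first coordinates of the latter run through `t ∪ {0}`, so it stays
orthogonal. -/

section Shear

variable {R M N : Type*} [Ring R] [AddCommGroup M] [Module R M] [AddCommGroup N] [Module R N]

def LinearEquiv.shear (F : M →ₗ[R] N) : (M × N) ≃ₗ[R] M × N :=
  (LinearEquiv.refl R M).skewProd (LinearEquiv.refl R N) F

@[simp]
theorem LinearEquiv.shear_apply (F : M →ₗ[R] N) (p : M × N) : shear F p = (p.1, p.2 + F p.1) :=
  rfl

@[simp]
theorem LinearEquiv.shear_symm_apply (F : M →ₗ[R] N) (p : M × N) :
    (shear F).symm p = (p.1, p.2 - F p.1) :=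
  rfl

theorem Submodule.map_shear_prod_eq (S : Submodule R (M × N)) (F : M →ₗ[R] N)
    (hF : ∀ x ∈ S.map (LinearMap.fst R M N), (x, F x) ∈ S) :
    ((S.map (LinearMap.fst R M N)).prod (S.comap (LinearMap.inr R M N))).map
      (LinearEquiv.shear F : M × N →ₗ[R] M × N) = S := by
  ext p
  simp only [Submodule.mem_map_equiv, LinearEquiv.shear_symm_apply, Submodule.mem_prod,
    Submodule.mem_comap, LinearMap.inr_apply]
  have hdiff : ((0 : M), p.2 - F p.1) = p - (p.1, F p.1) := by ext <;> simp
  rw [hdiff]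
  constructor
  · rintro ⟨hx, hp⟩
    simpa using add_mem hp (hF _ hx)
  · intro hp
    have hp₁ : p.1 ∈ S.map (LinearMap.fst R M N) := ⟨p, hp, rfl⟩
    exact ⟨hp₁, sub_mem hp (hF _ hp₁)⟩

theorem linearIndependent_shear_image_inl_union_inr (F : M →ₗ[R] N) {s : Set M} {t : Set N}
    (hs : LinearIndependent R ((↑) : s → M)) (ht : LinearIndependent R ((↑) : t → N)) :
    LinearIndependent R
      ((↑) : (LinearEquiv.shear F '' (LinearMap.inl R M N '' s ∪ LinearMap.inr R M N '' t)) →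
        M × N) :=
  LinearIndepOn.image (hs.inl_union_inr ht) (by simp)

theorem span_shear_image_inl_union_inr (F : M →ₗ[R] N) (s : Set M) (t : Set N) :
    Submodule.span R
        (LinearEquiv.shear F '' (LinearMap.inl R M N '' s ∪ LinearMap.inr R M N '' t)) =
      ((Submodule.span R s).prod (Submodule.span R t)).map
        (LinearEquiv.shear F : M × N →ₗ[R] M × N) := by
  rw [Submodule.span_image_linearEquiv, LinearMap.span_inl_union_inr]

end Shear

theorem Submodule.exists_linearMap_forall_mk_mem {K V W : Type*} [DivisionRing K]
    [AddCommGroup V] [Module K V] [AddCommGroup W] [Module K W] (S : Submodule K (V × W)) :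
    ∃ F : V →ₗ[K] W, ∀ x ∈ S.map (LinearMap.fst K V W), (x, F x) ∈ S := by
  obtain ⟨g, hg⟩ := ((LinearMap.fst K V W).domRestrict S).rangeRestrict
    |>.exists_rightInverse_of_surjective (LinearMap.range_rangeRestrict _)
  obtain ⟨F, hF⟩ := LinearMap.exists_extend ((LinearMap.snd K V W).comp (S.subtype.comp g))
  refine ⟨F, fun x hx => ?_⟩
  let y : LinearMap.range ((LinearMap.fst K V W).domRestrict S) :=
    ⟨x, by rwa [LinearMap.range_domRestrict]⟩
  have hfst : ((g y : S) : V × W).1 = x := congrArg Subtype.val (LinearMap.congr_fun hg y)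
  have hsnd : F x = ((g y : S) : V × W).2 := LinearMap.congr_fun hF y
  rw [hsnd, ← hfst]
  exact (g y).2

theorem isNaturalBasisSet_shear_image_inl_union_inr {E E' : Type*} [NonUnitalNonAssocRing E]
    [Module ℂ E] [NonUnitalNonAssocRing E'] [Module ℂ E'] (hzero : ∀ x y : E', x * y = 0)
    (F : E →ₗ[ℂ] E') {t : Set E} {w : Set E'} (ht : IsNaturalBasisSet E t)
    (hw : LinearIndependent ℂ ((↑) : w → E')) (hw_span : Submodule.span ℂ w = ⊤) :
    IsNaturalBasisSet (E × E')
      (LinearEquiv.shear F '' (LinearMap.inl ℂ E E' '' t ∪ LinearMap.inr ℂ E E' '' w)) := by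
  obtain ⟨ht_li, ht_span, ht_orth⟩ := ht
  refine ⟨linearIndependent_shear_image_inl_union_inr F ht_li hw, ?_, ?_⟩
  · rw [span_shear_image_inl_union_inr, ht_span, hw_span, Submodule.prod_top, Submodule.map_top,
      LinearEquiv.range]
  · have hmul : ∀ p q : E × E', p.1 * q.1 = 0 → p * q = 0 := fun p q h => Prod.ext h (hzero _ _)
    rintro _ ⟨_, ⟨e, he, rfl⟩ | ⟨v, -, rfl⟩, rfl⟩ _ ⟨_, ⟨e', he', rfl⟩ | ⟨v', -, rfl⟩, rfl⟩ hne <;>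
      apply hmul
    · exact ht_orth e he e' he' (by rintro rfl; exact hne rfl)
    all_goals simp

theorem stmt8_general (E E' : Type*) [NonUnitalNonAssocRing E] [Module ℂ E]
    [NonUnitalNonAssocRing E'] [Module ℂ E']
    (hzero : ∀ x y : E', x * y = 0)
    (hP : ConditionP E) :
    ConditionP (E × E') := by
  intro S
  obtain ⟨F, hF⟩ := S.toSubmodule.exists_linearMap_forall_mk_mem
  obtain ⟨s, t, hst, hs, hs_span, ht⟩ := hP (S.map (NonUnitalAlgHom.fst ℂ E E'))
  obtain ⟨b, -, hb_span, hb⟩ :=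
    exists_linearIndependent ℂ (S.toSubmodule.comap (LinearMap.inr ℂ E E') : Set E')
  obtain ⟨w, -, hbw, hw_span, hw⟩ := exists_linearIndepOn_id_extension hb (Set.subset_univ b)
  refine ⟨LinearEquiv.shear F '' (LinearMap.inl ℂ E E' '' s ∪ LinearMap.inr ℂ E E' '' b),
    LinearEquiv.shear F '' (LinearMap.inl ℂ E E' '' t ∪ LinearMap.inr ℂ E E' '' w),
    Set.image_mono (Set.union_subset_union (Set.image_mono hst) (Set.image_mono hbw)),
    linearIndependent_shear_image_inl_union_inr F hs hb, ?_,
    isNaturalBasisSet_shear_image_inl_union_inr hzero F ht hw ?_⟩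
  · rw [span_shear_image_inl_union_inr, hs_span, hb_span, Submodule.span_eq,
      NonUnitalSubalgebra.map_toSubmodule]
    exact S.toSubmodule.map_shear_prod_eq F hF
  · exact eq_top_iff.2 fun x _ => hw_span (Set.mem_univ x)

theorem stmt8 (E E' : Type*) [NonUnitalNonAssocRing E] [Module ℂ E]
    [NonUnitalNonAssocRing E'] [Module ℂ E']
    [FiniteDimensional ℂ E] [FiniteDimensional ℂ E'] (k : ℕ)
    (hk : Module.finrank ℂ E' = k)
    (hzero : ∀ x y : E', x * y = 0)
    (hEvol : ∃ t : Set E, IsNaturalBasisSet E t)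
    (hP : ConditionP E) :
    ConditionP (E × E') :=
  stmt8_general E E' hzero hP
end

section
/- Let E = E1 ⊕ E2 be a finite-dimensional complex evolution algebra written as a direct sum of two evolution subalgebras E1 and E2 (products between E1 and E2 are zero). If E satisfies condition P, then E1 and E2 each satisfy condition P. -/
open scoped BigOperators

/-!
A direct summand `E₁` of `E = E₁ ⊕ E₂` with `E₁ E₂ = E₂ E₁ = 0` is a retract of `E` in the
category of algebras: the projection `π : E → E₁` along `E₂` is multiplicative. Condition P
passes to retracts. Given a subalgebra `S` of `E₁`, condition P for `E` yields a natural basis `t`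
of `E` extending a basis `s` of `S ⊆ E`. Then `π s` is a basis of `S`, since `π` is the identity
on `S`, and `π t` is a spanning set of pairwise orthogonal vectors of `E₁`, because `π` is a
surjective homomorphism. So `π s` extends to a natural basis of `E₁` inside `π t`.
-/

namespace NonUnitalSubalgebra

variable {R E : Type*} [CommRing R] [NonUnitalNonAssocRing E] [Module R E]

noncomputable def projectionOnto (E₁ E₂ : NonUnitalSubalgebra R E)
    (hcompl : IsCompl E₁.toSubmodule E₂.toSubmodule)
    (horth : ∀ x ∈ E₁, ∀ y ∈ E₂, x * y = 0 ∧ y * x = 0) : E →ₙₐ[R] E₁ where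
  toFun := E₁.toSubmodule.projectionOnto E₂.toSubmodule hcompl
  map_smul' := map_smul _
  map_zero' := map_zero _
  map_add' := map_add _
  map_mul' x y := by
    let π : E →ₗ[R] E₁ := E₁.toSubmodule.projectionOnto E₂.toSubmodule hcompl
    change π (x * y) = π x * π y
    have hπ : ∀ a ∈ E₁, ∀ b ∈ E₂, (π (a + b) : E) = a := fun a ha b hb => by
      rw [map_add, Submodule.projectionOnto_apply_of_mem_right hcompl hb, add_zero,
        Submodule.projectionOnto_apply_left hcompl ⟨a, ha⟩]
    obtain ⟨a, ha : a ∈ E₁, b, hb : b ∈ E₂, rfl⟩ :=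
      Submodule.mem_sup.1 (hcompl.sup_eq_top ▸ Submodule.mem_top (x := x))
    obtain ⟨c, hc : c ∈ E₁, d, hd : d ∈ E₂, rfl⟩ :=
      Submodule.mem_sup.1 (hcompl.sup_eq_top ▸ Submodule.mem_top (x := y))
    have hmul : (a + b) * (c + d) = a * c + b * d := by
      rw [add_mul, mul_add, mul_add, (horth a ha d hd).1, (horth c hc b hb).2]
      abel
    ext
    rw [hmul, MulMemClass.coe_mul, hπ _ (mul_mem ha hc) _ (mul_mem hb hd), hπ a ha b hb,
      hπ c hc d hd]

theorem leftInverse_projectionOnto_subtype (E₁ E₂ : NonUnitalSubalgebra R E)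
    (hcompl : IsCompl E₁.toSubmodule E₂.toSubmodule)
    (horth : ∀ x ∈ E₁, ∀ y ∈ E₂, x * y = 0 ∧ y * x = 0) :
    Function.LeftInverse (projectionOnto E₁ E₂ hcompl horth)
      (NonUnitalSubalgebraClass.subtype E₁) :=
  Submodule.projectionOnto_apply_left hcompl

end NonUnitalSubalgebra

section

variable {E F : Type*} [NonUnitalNonAssocRing E] [Module ℂ E]
  [NonUnitalNonAssocRing F] [Module ℂ F]

theorem IsNaturalBasisSet.exists_extension_of_surjective (f : E →ₙₐ[ℂ] F)
    (hf : Function.Surjective f) {t : Set E} (ht : IsNaturalBasisSet E t) {u : Set F}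
    (hu : LinearIndepOn ℂ id u) (hut : u ⊆ f '' t) : ∃ b, u ⊆ b ∧ IsNaturalBasisSet F b := by
  obtain ⟨ht_ind, ht_span, ht_orth⟩ := ht
  obtain ⟨b, hbt, hub, htb, hb_ind⟩ := exists_linearIndepOn_id_extension hu hut
  have hft_span : Submodule.span ℂ (f '' t) = ⊤ := by
    change Submodule.span ℂ ((f : E →ₗ[ℂ] F) '' t) = ⊤
    rw [Submodule.span_image, ht_span, Submodule.map_top, LinearMap.range_eq_top]
    exact hf
  refine ⟨b, hub, hb_ind, ?_, ?_⟩
  · exact top_le_iff.1 (hft_span ▸ Submodule.span_le.2 htb)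
  · rintro _ hx' _ hy' hxy
    obtain ⟨x, hx, rfl⟩ := hbt hx'
    obtain ⟨y, hy, rfl⟩ := hbt hy'
    rw [← map_mul, ht_orth x hx y hy (ne_of_apply_ne f hxy), map_zero]

theorem ConditionP.of_leftInverse (f : E →ₙₐ[ℂ] F) (g : F →ₙₐ[ℂ] E)
    (hfg : Function.LeftInverse f g) (hP : ConditionP E) : ConditionP F := by
  intro S
  obtain ⟨s, t, hst, hs_ind, hs_span, ht⟩ := hP (S.map g)
  have hgf : ∀ x ∈ s, g (f x) = x := fun x hx => by
    have hx : x ∈ (S.map g).toSubmodule := hs_span ▸ Submodule.subset_span hx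
    obtain ⟨y, -, rfl⟩ := NonUnitalSubalgebra.mem_map.1 hx
    rw [hfg y]
  have hfs_ind : LinearIndepOn ℂ id (f '' s) := by
    refine LinearIndepOn.id_image (LinearIndependent.of_comp (g : F →ₗ[ℂ] E) ?_)
    convert hs_ind using 1
    exact funext fun x => hgf x x.2
  have hfs_span : Submodule.span ℂ (f '' s) = S.toSubmodule := by
    change Submodule.span ℂ ((f : E →ₗ[ℂ] F) '' s) = S.toSubmodule
    rw [Submodule.span_image, hs_span, NonUnitalSubalgebra.map_toSubmodule, ← Submodule.map_comp]
    have hfg' : (f : E →ₗ[ℂ] F) ∘ₗ LinearMapClass.linearMap g = LinearMap.id :=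
      LinearMap.ext hfg
    rw [hfg', Submodule.map_id]
  obtain ⟨b, hfsb, hb⟩ :=
    ht.exists_extension_of_surjective f hfg.surjective hfs_ind (Set.image_mono hst)
  exact ⟨f '' s, b, hfsb, hfs_ind, hfs_span, hb⟩

end

theorem stmt9_general (E : Type*) [NonUnitalNonAssocRing E] [Module ℂ E]
    (E₁ E₂ : NonUnitalSubalgebra ℂ E)
    (hdisj : E₁.toSubmodule ⊓ E₂.toSubmodule = ⊥)
    (hsup : E₁.toSubmodule ⊔ E₂.toSubmodule = ⊤)
    (horth : ∀ x ∈ E₁, ∀ y ∈ E₂, x * y = 0 ∧ y * x = 0)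
    (hP : ConditionP E) :
    ConditionP E₁ ∧ ConditionP E₂ := by
  have hcompl : IsCompl E₁.toSubmodule E₂.toSubmodule := IsCompl.of_eq hdisj hsup
  have horth' : ∀ x ∈ E₂, ∀ y ∈ E₁, x * y = 0 ∧ y * x = 0 :=
    fun x hx y hy => (horth y hy x hx).symm
  exact ⟨hP.of_leftInverse _ _
      (NonUnitalSubalgebra.leftInverse_projectionOnto_subtype E₁ E₂ hcompl horth),
    hP.of_leftInverse _ _
      (NonUnitalSubalgebra.leftInverse_projectionOnto_subtype E₂ E₁ hcompl.symm horth')⟩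

theorem stmt9 (E : Type*) [NonUnitalNonAssocRing E] [Module ℂ E] [FiniteDimensional ℂ E]
    (hEvol : ∃ t : Set E, IsNaturalBasisSet E t)
    (E₁ E₂ : NonUnitalSubalgebra ℂ E)
    (hdisj : E₁.toSubmodule ⊓ E₂.toSubmodule = ⊥)
    (hsup : E₁.toSubmodule ⊔ E₂.toSubmodule = ⊤)
    (horth : ∀ x ∈ E₁, ∀ y ∈ E₂, x * y = 0 ∧ y * x = 0)
    (hP : ConditionP E) :
    ConditionP E₁ ∧ ConditionP E₂ :=
  stmt9_general E E₁ E₂ hdisj hsup horth hP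
end

section
/- For k ≥ 2, the k-dimensional complex evolution algebra ES_k with natural basis {e1,...,ek}, multiplication e_i·e_i = e_{i+1} for 1 ≤ i ≤ k-1, e_k·e_k = e_1, and e_i·e_j = 0 for i≠j, does not satisfy condition P: the element x = e_1 + e_2 + ... + e_k satisfies x·x = x, so ⟨x⟩ is a 1-dimensional subalgebra, but the basis of ⟨x⟩ cannot be extended to a pairwise-orthogonal basis of ES_k. -/
open scoped BigOperators

/-- Structure constants of the cyclic evolution algebra `ES_k`:
`e_i² = e_{i+1}` (indices mod `k`), i.e. `e_i² = e_{i+1}` for `i < k` and `e_k² = e_1`. -/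
noncomputable def AES (k : ℕ) : Fin k → Fin k → ℂ :=
  fun i j => if (j : ℕ) = ((i : ℕ) + 1) % k then 1 else 0

lemma evMul_AES_apply {k : ℕ} [NeZero k] (hk : 2 ≤ k) (u v : Fin k → ℂ) (j : Fin k) :
    evMul (AES k) u v j = u (j - 1) * v (j - 1) := by
  have h1 : ((1 : Fin k) : ℕ) = 1 := by
    rw [Fin.val_one', Nat.mod_eq_of_lt hk]
  have key : ∀ i : Fin k, ((j : ℕ) = ((i : ℕ) + 1) % k) ↔ i = j - 1 := by
    intro i
    have hadd : ((i + 1 : Fin k) : ℕ) = ((i : ℕ) + 1) % k := by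
      rw [Fin.add_def, h1]
    constructor
    · intro h
      have hij : i + 1 = j := by
        apply Fin.ext; rw [hadd, ← h]
      exact eq_sub_of_add_eq hij
    · intro h
      subst h
      rw [← hadd, sub_add_cancel]
  unfold evMul AES
  simp only [key]
  simp [mul_ite, Finset.sum_ite_eq']

theorem stmt11 (k : ℕ) (hk : 2 ≤ k) :
    let x : Fin k → ℂ := fun _ => 1   -- x = e₁ + e₂ + ⋯ + e_k
    -- x·x = x, so ⟨x⟩ is a 1-dimensional subalgebra,
    evMul (AES k) x x = x ∧
    -- but x cannot be completed to a natural basis of ES_k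
    ¬ ∃ t : Set (Fin k → ℂ), x ∈ t ∧
        LinearIndependent ℂ ((↑) : t → (Fin k → ℂ)) ∧ Submodule.span ℂ t = ⊤ ∧
        (∀ u ∈ t, ∀ v ∈ t, u ≠ v → evMul (AES k) u v = 0) := by
  haveI : NeZero k := ⟨by omega⟩
  intro x
  have hmul : ∀ u v : Fin k → ℂ, ∀ j, evMul (AES k) u v j = u (j - 1) * v (j - 1) :=
    evMul_AES_apply hk
  constructor
  · funext j
    rw [hmul]
    simp [x]
  · rintro ⟨t, hxt, hli, hspan, horth⟩
    -- any v ∈ t other than x must be 0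
    have hts : t ⊆ {x} := by
      intro v hv
      by_contra hvx
      have hvx' : x ≠ v := fun h => hvx (h ▸ rfl)
      have h0 : evMul (AES k) x v = 0 := horth x hxt v hv hvx'
      have hv0 : v = 0 := by
        funext i
        have := congrFun h0 (i + 1)
        rw [hmul] at this
        simpa [x, add_sub_cancel_right] using this
      exact hli.ne_zero ⟨v, hv⟩ (by simpa using hv0)
    -- so span t ⊆ span {x}, contradicting k ≥ 2
    have h01 : (0 : Fin k) ≠ 1 := by
      intro h
      have := congrArg Fin.val h
      rw [Fin.val_one', Nat.mod_eq_of_lt hk] at this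
      simp at this
    have he : (Pi.single (0 : Fin k) 1 : Fin k → ℂ) ∈ Submodule.span ℂ t := by
      rw [hspan]; trivial
    have he' : (Pi.single (0 : Fin k) 1 : Fin k → ℂ) ∈ Submodule.span ℂ ({x} : Set (Fin k → ℂ)) :=
      Submodule.span_mono hts he
    rw [Submodule.mem_span_singleton] at he'
    obtain ⟨c, hc⟩ := he'
    have h0 := congrFun hc 0
    have h1 := congrFun hc 1
    rw [Pi.single_eq_same] at h0
    rw [Pi.single_eq_of_ne h01.symm] at h1
    have hc0 : c = 1 := by simpa [x] using h0
    have hc1 : c = 0 := by simpa [x] using h1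
    rw [hc1] at hc0
    exact one_ne_zero hc0.symm
end

section
/- Let E ∈ ZN^k be a k-dimensional complex evolution algebra with natural basis {e_1,...,e_k} whose structure matrix is strictly upper triangular with a_{i,i+1} = 1 for 1 ≤ i ≤ k-1 and last column/row zero as in the maximal-nilpotency form (so e_i² ∈ e_{i+1} + span{e_{i+2},...,e_{k-1}} for i ≤ k-2, e_{k-1}² = e_k, e_k² = 0). Then every subalgebra of E equals span{e_i, e_{i+1}, ..., e_k} for some i, and in particular every subalgebra of E is an evolution subalgebra whose natural basis extends to a natural basis of E (E satisfies condition P). -/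
open scoped BigOperators

/-!
Let `m` be the least index at which some element of a subalgebra `S` has a nonzero coordinate,
and let `x ∈ S` be such an element. Because `A` is strictly upper triangular with ones on the
superdiagonal, `x²` has its leading coordinate at `m + 1`, so by downward induction on `m` all
`e_j` with `j > m` lie in `S`; subtracting them from `x` leaves a multiple of `e_m`. Hence
`S = span {e_j | j ≥ m}`, and the natural basis of `E` restricts to a natural basis of `S`.
-/

open Submodule Set

theorem Pi.mem_span_image_single_iff {ι R : Type*} [Finite ι] [DecidableEq ι] [Semiring R]
    {s : Set ι} {x : ι → R} :
    x ∈ span R ((fun i => Pi.single i (1 : R)) '' s) ↔ ∀ i ∉ s, x i = 0 := by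
  rw [← funext (Pi.basisFun_apply R ι), Module.Basis.mem_span_image]
  simp only [subset_def, Finset.mem_coe, Finsupp.mem_support_iff, Pi.basisFun_repr]
  exact forall_congr' fun i => not_imp_comm

theorem evMul_single_single_of_ne_s15 {k : ℕ} (A : Fin k → Fin k → ℂ) {a b : Fin k} (hab : a ≠ b) :
    evMul A (Pi.single a 1) (Pi.single b 1) = 0 := by
  funext j
  refine Finset.sum_eq_zero fun i _ => ?_
  by_cases hia : i = a
  · subst hia; simp [Pi.single_eq_of_ne hab]
  · simp [Pi.single_eq_of_ne hia]

section

variable {k : ℕ} {A : Fin k → Fin k → ℂ}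

theorem evMul_apply_eq_zero_of_le (hA : ∀ i j : Fin k, j ≤ i → A i j = 0) {m j : Fin k}
    {x : Fin k → ℂ} (y : Fin k → ℂ) (hx : ∀ i < m, x i = 0) (hj : j ≤ m) :
    evMul A x y j = 0 := by
  refine Finset.sum_eq_zero fun i _ => ?_
  rcases lt_or_ge i m with him | hmi
  · simp [hx i him]
  · simp [hA i j (hj.trans hmi)]

theorem evMul_apply_of_val_eq_succ (hA : ∀ i j : Fin k, j ≤ i → A i j = 0) {m j : Fin k}
    {x : Fin k → ℂ} (y : Fin k → ℂ) (hx : ∀ i < m, x i = 0) (hj : (j : ℕ) = m + 1) :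
    evMul A x y j = x m * y m * A m j := by
  refine Finset.sum_eq_single m (fun i _ him => ?_) (by simp)
  rcases lt_or_gt_of_ne him with him | hmi
  · simp [hx i him]
  · simp [hA i j (by rw [Fin.le_def, hj]; exact hmi)]

theorem span_image_single_Ici_le_of_mem (h1 : ∀ i j : Fin k, (j : ℕ) = i + 1 → A i j = 1)
    (hA : ∀ i j : Fin k, j ≤ i → A i j = 0) {S : Submodule ℂ (Fin k → ℂ)}
    (hS : ∀ x ∈ S, ∀ y ∈ S, evMul A x y ∈ S) (m : Fin k) {x : Fin k → ℂ} (hxS : x ∈ S)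
    (hx : ∀ i < m, x i = 0) (hxm : x m ≠ 0) :
    span ℂ ((fun i => Pi.single i 1) '' Ici m) ≤ S := by
  induction m using WellFoundedGT.induction generalizing x with
  | _ m ih =>
  have hIoi : span ℂ ((fun i => Pi.single i 1) '' Ioi m) ≤ S := by
    rw [span_le]
    rintro _ ⟨j, hmj, rfl⟩
    have hmk : (m : ℕ) + 1 < k := by have := Fin.lt_def.1 hmj; omega
    let m' : Fin k := ⟨m + 1, hmk⟩
    refine ih m' (Fin.lt_def.2 (Nat.lt_succ_self _)) (hS x hxS x hxS)
      (fun i hi => evMul_apply_eq_zero_of_le hA x hx (Fin.le_def.2 (Nat.lt_succ_iff.1 hi)))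
      ?_ (subset_span ⟨j, Fin.le_def.2 (Fin.lt_def.1 hmj), rfl⟩)
    rw [evMul_apply_of_val_eq_succ hA x hx rfl, h1 m m' rfl, mul_one]
    exact mul_ne_zero hxm hxm
  have hxe : x - x m • Pi.single m 1 ∈ span ℂ ((fun i => Pi.single i 1) '' Ioi m) := by
    refine Pi.mem_span_image_single_iff.2 fun i hi => ?_
    rcases (not_lt.1 (mem_Ioi.not.1 hi)).lt_or_eq with him | rfl
    · simp [hx i him, Pi.single_eq_of_ne him.ne]
    · simp
  have hem : (Pi.single m 1 : Fin k → ℂ) ∈ S := by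
    refine (S.smul_mem_iff hxm).1 ?_
    simpa using S.sub_mem hxS (hIoi hxe)
  rw [← Ioi_insert, image_insert_eq, span_insert, sup_le_iff, span_singleton_le_iff_mem]
  exact ⟨hem, hIoi⟩

theorem eq_span_image_single_Ici_of_ne_bot (h1 : ∀ i j : Fin k, (j : ℕ) = i + 1 → A i j = 1)
    (hA : ∀ i j : Fin k, j ≤ i → A i j = 0) {S : Submodule ℂ (Fin k → ℂ)}
    (hS : ∀ x ∈ S, ∀ y ∈ S, evMul A x y ∈ S) (hne : S ≠ ⊥) :
    ∃ m : Fin k, S = span ℂ ((fun i => Pi.single i 1) '' Ici m) := by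
  obtain ⟨x₀, hx₀S, hx₀⟩ := exists_mem_ne_zero_of_ne_bot hne
  obtain ⟨j₀, hj₀⟩ := Function.ne_iff.1 hx₀
  obtain ⟨m, ⟨x, hxS, hxm⟩, hmin⟩ :=
    exists_min_image {j | ∃ x ∈ S, x j ≠ 0} id (toFinite _) ⟨j₀, x₀, hx₀S, hj₀⟩
  have hvanish : ∀ y ∈ S, ∀ i < m, y i = 0 := fun y hy i hi =>
    by_contra fun h => (hmin i ⟨y, hy, h⟩).not_gt hi
  refine ⟨m, le_antisymm (fun y hy => ?_) (span_image_single_Ici_le_of_mem h1 hA hS m hxS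
    (hvanish x hxS) hxm)⟩
  exact Pi.mem_span_image_single_iff.2 fun i hi => hvanish y hy i (not_le.1 hi)

theorem exists_eq_span_image_single (h1 : ∀ i j : Fin k, (j : ℕ) = i + 1 → A i j = 1)
    (hA : ∀ i j : Fin k, j ≤ i → A i j = 0) {S : Submodule ℂ (Fin k → ℂ)}
    (hS : ∀ x ∈ S, ∀ y ∈ S, evMul A x y ∈ S) :
    ∃ I : Set (Fin k), S = span ℂ ((fun i => Pi.single i 1) '' I) := by
  rcases eq_or_ne S ⊥ with rfl | hne
  · exact ⟨∅, by simp⟩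
  · obtain ⟨m, hm⟩ := eq_span_image_single_Ici_of_ne_bot h1 hA hS hne
    exact ⟨Ici m, hm⟩

end

theorem stmt15_general (k : ℕ) (A : Fin k → Fin k → ℂ)
    -- A is of maximal-nilpotency (ZN^k) form:
    -- superdiagonal entries equal 1 (so e_i² = e_{i+1} + ⋯ and e_{k-1}² = e_k),
    (h1 : ∀ i j : Fin k, (j : ℕ) = (i : ℕ) + 1 → A i j = 1)
    -- entries on or below the diagonal vanish (in particular e_k² = 0),
    (h2 : ∀ i j : Fin k, (j : ℕ) ≤ (i : ℕ) → A i j = 0) :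
    let e : Fin k → (Fin k → ℂ) := fun i => Pi.single i 1
    -- every nonzero subalgebra is span{e_i, e_{i+1}, …, e_k},
    (∀ S : Submodule ℂ (Fin k → ℂ), (∀ x ∈ S, ∀ y ∈ S, evMul A x y ∈ S) → S ≠ ⊥ →
      ∃ i : Fin k, S = Submodule.span ℂ (e '' {j | i ≤ j})) ∧
    -- in particular every subalgebra has a natural basis extending to one of E (condition P)
    (∀ S : Submodule ℂ (Fin k → ℂ), (∀ x ∈ S, ∀ y ∈ S, evMul A x y ∈ S) →
      ∃ s t : Set (Fin k → ℂ), s ⊆ t ∧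
        LinearIndependent ℂ ((↑) : s → (Fin k → ℂ)) ∧ Submodule.span ℂ s = S ∧
        LinearIndependent ℂ ((↑) : t → (Fin k → ℂ)) ∧ Submodule.span ℂ t = ⊤ ∧
        (∀ u ∈ t, ∀ v ∈ t, u ≠ v → evMul A u v = 0)) := by
  intro e
  refine ⟨fun S hS hne => eq_span_image_single_Ici_of_ne_bot h1 h2 hS hne, fun S hS => ?_⟩
  obtain ⟨I, rfl⟩ := exists_eq_span_image_single h1 h2 hS
  have he : ⇑(Pi.basisFun ℂ (Fin k)) = e := funext (Pi.basisFun_apply ℂ (Fin k))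
  have hli := (Pi.basisFun ℂ (Fin k)).linearIndependent
  rw [he] at hli
  refine ⟨e '' I, e '' univ, image_mono (subset_univ I), (hli.linearIndepOn I).id_image, rfl,
    (hli.linearIndepOn univ).id_image, ?_, ?_⟩
  · rw [image_univ, ← he, Module.Basis.span_eq]
  · rintro _ ⟨a, -, rfl⟩ _ ⟨b, -, rfl⟩ hab
    exact evMul_single_single_of_ne_s15 A (ne_of_apply_ne e hab)

theorem stmt15 (k : ℕ) (hk : 2 ≤ k) (A : Fin k → Fin k → ℂ)
    -- A is of maximal-nilpotency (ZN^k) form: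
    -- superdiagonal entries equal 1 (so e_i² = e_{i+1} + ⋯ and e_{k-1}² = e_k),
    (h1 : ∀ i j : Fin k, (j : ℕ) = (i : ℕ) + 1 → A i j = 1)
    -- entries on or below the diagonal vanish (in particular e_k² = 0),
    (h2 : ∀ i j : Fin k, (j : ℕ) ≤ (i : ℕ) → A i j = 0)
    -- the last column vanishes except for the entry coming from e_{k-1}² = e_k
    (h3 : ∀ i j : Fin k, (j : ℕ) = k - 1 → (i : ℕ) + 1 ≠ k - 1 → A i j = 0) :
    let e : Fin k → (Fin k → ℂ) := fun i => Pi.single i 1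
    -- every nonzero subalgebra is span{e_i, e_{i+1}, …, e_k},
    (∀ S : Submodule ℂ (Fin k → ℂ), (∀ x ∈ S, ∀ y ∈ S, evMul A x y ∈ S) → S ≠ ⊥ →
      ∃ i : Fin k, S = Submodule.span ℂ (e '' {j | i ≤ j})) ∧
    -- in particular every subalgebra has a natural basis extending to one of E (condition P)
    (∀ S : Submodule ℂ (Fin k → ℂ), (∀ x ∈ S, ∀ y ∈ S, evMul A x y ∈ S) →
      ∃ s t : Set (Fin k → ℂ), s ⊆ t ∧
        LinearIndependent ℂ ((↑) : s → (Fin k → ℂ)) ∧ Submodule.span ℂ s = S ∧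
        LinearIndependent ℂ ((↑) : t → (Fin k → ℂ)) ∧ Submodule.span ℂ t = ⊤ ∧
        (∀ u ∈ t, ∀ v ∈ t, u ≠ v → evMul A u v = 0)) :=
  stmt15_general k A h1 h2
end

section
/- In a complex evolution algebra E of type ZN^k (nilpotent of maximal index, with e_i² = e_{i+1} + Σ_{j≥i+2, j≤k-1} a_{ij} e_j for i ≤ k-2, e_{k-1}² = e_k, e_k² = 0), if a subalgebra M contains an element of the form e_j + Σ_{s=j+1}^{k} β_s e_s, then M contains all of e_j, e_{j+1}, ..., e_k. -/
open scoped BigOperators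

open Finset

def HasLeadingOne {ι R : Type*} [LT ι] [Zero R] [One R] (z : ι → R) (s : ι) : Prop :=
  z s = 1 ∧ ∀ t < s, z t = 0

section LinearAlgebra

variable {ι R : Type*} [Fintype ι] [LinearOrder ι] [Ring R]

theorem HasLeadingOne.single_eq_sub_sum {z : ι → R} {s : ι} (hz : HasLeadingOne z s) :
    Pi.single s 1 = z - ∑ t ∈ univ.filter (s < ·), Pi.single t (z t) := by
  funext u
  rw [Pi.sub_apply, Finset.sum_apply, Finset.sum_pi_single]
  simp only [mem_filter, mem_univ, true_and, Pi.single_apply]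
  rcases lt_trichotomy u s with h | rfl | h
  · simp [hz.2 u h, h.ne, h.not_gt]
  · simp [hz.1]
  · simp [h, h.ne']

theorem Submodule.single_mem_of_forall_exists_hasLeadingOne (M : Submodule R (ι → R)) (j : ι)
    (h : ∀ s, j ≤ s → ∃ z ∈ M, HasLeadingOne z s) (s : ι) (hjs : j ≤ s) :
    Pi.single s 1 ∈ M := by
  induction s using WellFoundedGT.induction with
  | _ s ih =>
    obtain ⟨z, hzM, hz⟩ := h s hjs
    rw [hz.single_eq_sub_sum]
    refine M.sub_mem hzM (M.sum_mem fun t ht => ?_)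
    have hst : s < t := (mem_filter.mp ht).2
    have hsmul := M.smul_mem (z t) (ih t hst (hjs.trans hst.le))
    rwa [← Pi.single_smul', smul_eq_mul, mul_one] at hsmul

end LinearAlgebra

section EvolutionAlgebra

variable {n : ℕ} {A : Fin n → Fin n → ℂ}

theorem HasLeadingOne.mul_self_mul_eq_zero (hA : ∀ i j : Fin n, j ≤ i → A i j = 0)
    {z : Fin n → ℂ} {s i u : Fin n} (hz : HasLeadingOne z s) (hi : i ≠ s)
    (hu : (u : ℕ) ≤ s + 1) : z i * z i * A i u = 0 := by
  rcases hi.lt_or_gt with h | h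
  · simp [hz.2 i h]
  · have : (s : ℕ) < i := h
    simp [hA i u (show (u : ℕ) ≤ i by omega)]

theorem HasLeadingOne.evMul_self (hA : ∀ i j : Fin n, j ≤ i → A i j = 0)
    (hA₁ : ∀ i j : Fin n, (j : ℕ) = i + 1 → A i j = 1) {z : Fin n → ℂ} {s t : Fin n}
    (hz : HasLeadingOne z s) (ht : (t : ℕ) = s + 1) : HasLeadingOne (evMul A z z) t := by
  constructor
  · change ∑ i, z i * z i * A i t = 1
    rw [sum_eq_single s (fun i _ hi => hz.mul_self_mul_eq_zero hA hi ht.le) (by simp)]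
    simp [hz.1, hA₁ s t ht]
  · intro u hu
    have hus : (u : ℕ) ≤ s := by have : (u : ℕ) < t := hu; omega
    refine sum_eq_zero fun i _ => ?_
    rcases eq_or_ne i s with rfl | hi
    · simp [hA i u hus]
    · exact hz.mul_self_mul_eq_zero hA hi (by omega)

theorem exists_mem_hasLeadingOne_of_le (hA : ∀ i j : Fin n, j ≤ i → A i j = 0)
    (hA₁ : ∀ i j : Fin n, (j : ℕ) = i + 1 → A i j = 1) {M : Submodule ℂ (Fin n → ℂ)}
    (hM : ∀ x ∈ M, evMul A x x ∈ M) {j : Fin n} {x : Fin n → ℂ} (hxM : x ∈ M)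
    (hx : HasLeadingOne x j) (s : Fin n) (hjs : j ≤ s) : ∃ z ∈ M, HasLeadingOne z s := by
  induction s using WellFoundedLT.induction with
  | _ s ih =>
    rcases hjs.eq_or_lt with rfl | hjs
    · exact ⟨x, hxM, hx⟩
    have hj : (j : ℕ) < s := hjs
    let p : Fin n := ⟨s - 1, by omega⟩
    obtain ⟨z, hzM, hz⟩ := ih p (show (p : ℕ) < s by simp [p]; omega)
      (show (j : ℕ) ≤ p by simp [p]; omega)
    exact ⟨evMul A z z, hM z hzM, hz.evMul_self hA hA₁ (by simp [p]; omega)⟩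

end EvolutionAlgebra

theorem stmt16_general (k : ℕ) (A : Fin k → Fin k → ℂ)
    -- A is of maximal-nilpotency (ZN^k) form:
    (h1 : ∀ i j : Fin k, (j : ℕ) = (i : ℕ) + 1 → A i j = 1)
    (h2 : ∀ i j : Fin k, (j : ℕ) ≤ (i : ℕ) → A i j = 0)
    (M : Submodule ℂ (Fin k → ℂ)) (hM : ∀ x ∈ M, ∀ y ∈ M, evMul A x y ∈ M)
    -- M contains an element of the form e_j + ∑_{s=j+1}^k β_s e_s
    (j : Fin k) (x : Fin k → ℂ) (hxM : x ∈ M)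
    (hxj : x j = 1) (hxlow : ∀ s : Fin k, s < j → x s = 0) :
    -- then M contains e_j, e_{j+1}, …, e_k
    ∀ s : Fin k, j ≤ s → Pi.single s (1 : ℂ) ∈ M :=
  M.single_mem_of_forall_exists_hasLeadingOne j
    (exists_mem_hasLeadingOne_of_le h2 h1 (fun z hz => hM z hz z hz) hxM ⟨hxj, hxlow⟩)

theorem stmt16 (k : ℕ) (hk : 2 ≤ k) (A : Fin k → Fin k → ℂ)
    -- A is of maximal-nilpotency (ZN^k) form:
    (h1 : ∀ i j : Fin k, (j : ℕ) = (i : ℕ) + 1 → A i j = 1)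
    (h2 : ∀ i j : Fin k, (j : ℕ) ≤ (i : ℕ) → A i j = 0)
    (h3 : ∀ i j : Fin k, (j : ℕ) = k - 1 → (i : ℕ) + 1 ≠ k - 1 → A i j = 0)
    (M : Submodule ℂ (Fin k → ℂ)) (hM : ∀ x ∈ M, ∀ y ∈ M, evMul A x y ∈ M)
    -- M contains an element of the form e_j + ∑_{s=j+1}^k β_s e_s
    (j : Fin k) (x : Fin k → ℂ) (hxM : x ∈ M)
    (hxj : x j = 1) (hxlow : ∀ s : Fin k, s < j → x s = 0) :
    -- then M contains e_j, e_{j+1}, …, e_k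
    ∀ s : Fin k, j ≤ s → Pi.single s (1 : ℂ) ∈ M :=
  stmt16_general k A h1 h2 M hM j x hxM hxj hxlow
end

section
/- Let A = (a_{ij}) be an invertible 2×2 complex matrix. Then the system x1² = a_{11} x1 + a_{21} x2, x2² = a_{12} x1 + a_{22} x2 has a solution (x1, x2) ∈ ℂ² with x1 ≠ 0 and x2 ≠ 0. -/
/-!
Look for solutions on the line `x₂ = t x₁` with `t ≠ 0`. The first equation then forces
`x₁ = a₁₁ + a₂₁ t`, and the second becomes the cubic `t² (a₁₁ + a₂₁ t) = a₁₂ + a₂₂ t`.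
At a root `t`, `x₁` cannot vanish, since otherwise `(1, t)` would lie in the kernel of `Aᵀ`.
A nonzero root exists because the cubic `a₂₁ t³ + a₁₁ t² - a₂₂ t - a₁₂` is not a monomial:
`det A ≠ 0` forces two of its coefficients to be nonzero, and a polynomial over an
algebraically closed field all of whose roots vanish is a monomial.
-/

open Polynomial

theorem Polynomial.exists_isRoot_ne_zero_of_coeff_mul_coeff_ne_zero {K : Type*} [Field K]
    [IsAlgClosed K] {p : K[X]} {i j : ℕ} (hij : i ≠ j) (h : p.coeff i * p.coeff j ≠ 0) :
    ∃ t, t ≠ 0 ∧ p.IsRoot t := by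
  by_contra! hroots
  have hzero : ∀ t ∈ p.roots, t = 0 := fun t ht ↦
    by_contra fun ht0 ↦ hroots t ht0 (isRoot_of_mem_roots ht)
  have hmonomial : p = C p.leadingCoeff * X ^ p.natDegree := by
    conv_lhs =>
      rw [← C_leadingCoeff_mul_prod_multiset_X_sub_C (p := p) IsAlgClosed.card_roots_eq_natDegree,
        Multiset.eq_replicate_card.2 hzero]
    simp [IsAlgClosed.card_roots_eq_natDegree]
  rw [hmonomial, coeff_C_mul_X_pow, coeff_C_mul_X_pow] at h
  split_ifs at h with hi hj
  · exact hij (hi.trans hj.symm)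
  all_goals simp at h

theorem exists_ne_zero_quadratic_system_of_root {K : Type*} [Field K] {a b c d t : K}
    (hdet : a * d - b * c ≠ 0) (ht0 : t ≠ 0) (ht : b * t ^ 3 + a * t ^ 2 - d * t - c = 0) :
    ∃ x₁ x₂ : K, x₁ ≠ 0 ∧ x₂ ≠ 0 ∧
      x₁ ^ 2 = a * x₁ + b * x₂ ∧ x₂ ^ 2 = c * x₁ + d * x₂ := by
  have hx₁ : a + b * t ≠ 0 := by
    intro h
    apply hdet
    linear_combination (d - b * t ^ 2) * h + b * ht
  refine ⟨a + b * t, t * (a + b * t), hx₁, mul_ne_zero ht0 hx₁, by ring, ?_⟩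
  linear_combination (a + b * t) * ht

theorem stmt17 (A : Matrix (Fin 2) (Fin 2) ℂ) (hA : IsUnit A) :
    ∃ x₁ x₂ : ℂ, x₁ ≠ 0 ∧ x₂ ≠ 0 ∧
      x₁ ^ 2 = A 0 0 * x₁ + A 1 0 * x₂ ∧
      x₂ ^ 2 = A 0 1 * x₁ + A 1 1 * x₂ := by
  have hdet : A 0 0 * A 1 1 - A 1 0 * A 0 1 ≠ 0 := by
    simpa [Matrix.det_fin_two, mul_comm (A 0 1)] using
      ((Matrix.isUnit_iff_isUnit_det A).mp hA).ne_zero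
  set g : ℂ[X] := C (A 1 0) * X ^ 3 + C (A 0 0) * X ^ 2 - C (A 1 1) * X - C (A 0 1)
  have hcoeff : g.coeff 2 * g.coeff 1 - g.coeff 3 * g.coeff 0 ≠ 0 := by
    convert neg_ne_zero.mpr hdet using 1
    simp [g, coeff_X, coeff_C, neg_add_eq_sub]
  obtain ⟨t, ht0, ht⟩ : ∃ t, t ≠ 0 ∧ g.IsRoot t := by
    by_cases h : g.coeff 2 * g.coeff 1 = 0
    · exact exists_isRoot_ne_zero_of_coeff_mul_coeff_ne_zero (i := 3) (j := 0)
        (by decide) (fun h' ↦ hcoeff (by rw [h, h', sub_zero]))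
    · exact exists_isRoot_ne_zero_of_coeff_mul_coeff_ne_zero (by decide) h
  exact exists_ne_zero_quadratic_system_of_root hdet ht0 (by simpa [g] using ht)
end
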